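/- arXiv:1601.00295 — 3 statements merged into one kernel-verified Lean document; each statement's English description precedes it below -/
import Mathlib

section
/- If G = A * B is the free product of two nontrivial groups A and B, then G has a free subgroup whose cardinality equals the cardinality of G; i.e., there is a subgroup F of the free product A * B such that F is a free group and |F| = |A * B|. -/
open Monoid

namespace FreeProdBigAux

open Monoid.CoprodI Monoid.CoprodI.Word Function

universe u v w

section WordLemmas

variable {ι : Type*} {M : ι → Type*} [∀ i, Monoid (M i)]
variable [DecidableEq ι] [∀ i, DecidableEq (M i)]

theorem smul_toList_of_fstIdx_ne {i : ι} (m : M i) (hm : m ≠ 1) (w : Word M)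
    (h : w.fstIdx ≠ some i) :
    (of m • w).toList = ⟨i, m⟩ :: w.toList := by
  rw [← cons_eq_smul (h1 := h) (h2 := hm)]
  rfl

theorem word_cases (w : Word M) :
    w = empty ∨ ∃ (i : ι) (m : M i) (rest : Word M) (h1 : rest.fstIdx ≠ some i)
      (h2 : m ≠ 1), w = cons m rest h1 h2 := by
  induction w using consRecOn with
  | empty => exact Or.inl rfl
  | cons i m w h1 h2 _ => exact Or.inr ⟨i, m, w, h1, h2, rfl⟩

theorem fstIdx_eq_of_toList {w : Word M} {i : ι} {m : M i} {l} (h : w.toList = ⟨i, m⟩ :: l) :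
    w.fstIdx = some i := by
  simp [Word.fstIdx, h]

theorem smul_cons_merge {i : ι} (m m' : M i) (rest : Word M) (h1 : rest.fstIdx ≠ some i)
    (h2 : m' ≠ 1) (hmm : m * m' ≠ 1) :
    (of m • cons m' rest h1 h2).toList = ⟨i, m * m'⟩ :: rest.toList := by
  rw [cons_eq_smul, smul_smul, ← map_mul]
  exact smul_toList_of_fstIdx_ne _ hmm _ h1

end WordLemmas

section GroupWordLemmas

variable {ι : Type*} {M : ι → Type*} [∀ i, Group (M i)]
variable [DecidableEq ι] [∀ i, DecidableEq (M i)]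

theorem smul_cons_cancel {i : ι} (m : M i) (rest : Word M) (h1 : rest.fstIdx ≠ some i)
    (h2 : m⁻¹ ≠ 1) :
    of m • cons m⁻¹ rest h1 h2 = rest := by
  rw [cons_eq_smul, smul_smul, ← map_mul, mul_inv_cancel, map_one, one_smul]

end GroupWordLemmas

section Bool

variable {M : Bool → Type u} [∀ b, Group (M b)]

/-- Ping-pong: a big free subgroup from generators indexed by nontrivial elements
of `M true`. -/
theorem exists_injective_pingpong [∀ b, Nontrivial (M b)]
    [Nontrivial {x : M true // x ≠ 1}] :
    ∃ ψ : FreeGroup {x : M true // x ≠ 1} →* CoprodI M, Injective ψ := by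
  classical
  obtain ⟨b₀, hb₀⟩ := exists_ne (1 : M false)
  set ι' := {x : M true // x ≠ 1} with hι'
  set t : ι' → CoprodI M :=
    fun a => of (a : M true) * of b₀ * of ((a : M true))⁻¹ * of b₀ with ht
  set X : ι' → Set (Word M) :=
    fun a => {w | w.toList.head? = some ⟨true, (a : M true)⟩} with hX
  set Y : ι' → Set (Word M) :=
    fun a => {w | w.toList.head? = some ⟨false, b₀⁻¹⟩ ∧
      w.toList.tail.head? = some ⟨true, (a : M true)⟩} with hY
  refine ⟨FreeGroup.lift t, FreeGroup.injective_lift_of_ping_pong t X Y ?_ ?_ ?_ ?_ ?_ ?_⟩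
  · -- nonempty
    intro a
    refine ⟨cons (a : M true) empty (by simp [fstIdx, empty]) a.2, ?_⟩
    simp [hX]
    rfl
  · -- X pairwise disjoint
    intro a a' hne
    rw [Function.onFun, Set.disjoint_left]
    intro w hw hw'
    simp only [hX, Set.mem_setOf_eq] at hw hw'
    rw [hw] at hw'
    apply hne
    apply Subtype.ext
    simpa using hw'
  · -- Y pairwise disjoint
    intro a a' hne
    rw [Function.onFun, Set.disjoint_left]
    intro w hw hw'
    simp only [hY, Set.mem_setOf_eq] at hw hw'
    rw [hw.2] at hw'
    apply hne
    apply Subtype.ext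
    simpa using hw'.2
  · -- X vs Y disjoint
    intro a a'
    rw [Set.disjoint_left]
    intro w hw hw'
    simp only [hX, hY, Set.mem_setOf_eq] at hw hw'
    rw [hw] at hw'
    simpa using hw'.1
  · -- t a • (Y a)ᶜ ⊆ X a
    intro a x hx
    rw [Set.mem_smul_set] at hx
    obtain ⟨w, hw, rfl⟩ := hx
    have hstep : (of ((a : M true))⁻¹ • of b₀ • w).fstIdx = some true := by
      rcases word_cases w with rfl | ⟨i, m, rest, h1, hm, rfl⟩
      · have h1 : (of b₀ • (empty : Word M)).toList = [⟨false, b₀⟩] :=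
          smul_toList_of_fstIdx_ne b₀ hb₀ _ (by simp [fstIdx, empty])
        have h2 := smul_toList_of_fstIdx_ne ((a : M true))⁻¹ (inv_ne_one.2 a.2)
          (of b₀ • (empty : Word M)) (by rw [fstIdx_eq_of_toList h1]; simp)
        exact fstIdx_eq_of_toList h2
      · cases i with
        | true =>
          have h1' : (of b₀ • cons m rest h1 hm).toList
              = ⟨false, b₀⟩ :: (cons m rest h1 hm).toList :=
            smul_toList_of_fstIdx_ne b₀ hb₀ _ (by simp)
          have h2 := smul_toList_of_fstIdx_ne ((a : M true))⁻¹ (inv_ne_one.2 a.2)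
            (of b₀ • cons m rest h1 hm) (by rw [fstIdx_eq_of_toList h1']; simp)
          exact fstIdx_eq_of_toList h2
        | false =>
          by_cases hc : b₀ * m = 1
          · have hm' : m = b₀⁻¹ := by
              rw [eq_inv_of_mul_eq_one_left hc, inv_inv]
            subst hm'
            rw [smul_cons_cancel b₀ rest h1 hm]
            rcases word_cases rest with rfl | ⟨j, m', rest', h1', hm', rfl⟩
            · have h2 := smul_toList_of_fstIdx_ne ((a : M true))⁻¹ (inv_ne_one.2 a.2)
                (empty : Word M) (by simp [fstIdx, empty])
              exact fstIdx_eq_of_toList h2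
            · cases j with
              | false => exact absurd (by simp) h1
              | true =>
                have hma : m' ≠ (a : M true) := by
                  intro hma
                  apply hw
                  constructor
                  · simp
                  · simp [hma]
                have hmerge := smul_cons_merge ((a : M true))⁻¹ m' rest' h1' hm'
                  (by
                    intro hcon
                    apply hma
                    have h' := eq_inv_of_mul_eq_one_right hcon
                    rw [inv_inv] at h'
                    exact h')
                exact fstIdx_eq_of_toList hmerge
          · have hmerge := smul_cons_merge b₀ m rest h1 hm hc
            have h2 := smul_toList_of_fstIdx_ne ((a : M true))⁻¹ (inv_ne_one.2 a.2)
              (of b₀ • cons m rest h1 hm) (by rw [fstIdx_eq_of_toList hmerge]; simp)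
            exact fstIdx_eq_of_toList h2
    have hmul : t a • w
        = of (a : M true) • of b₀ • of ((a : M true))⁻¹ • of b₀ • w := by
      rw [ht]
      simp only [mul_smul]
    have h3 : (of b₀ • of ((a : M true))⁻¹ • of b₀ • w).toList
        = ⟨false, b₀⟩ :: (of ((a : M true))⁻¹ • of b₀ • w).toList :=
      smul_toList_of_fstIdx_ne b₀ hb₀ _ (by rw [hstep]; simp)
    have h4 := smul_toList_of_fstIdx_ne (a : M true) a.2
      (of b₀ • of ((a : M true))⁻¹ • of b₀ • w) (by rw [fstIdx_eq_of_toList h3]; simp)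
    show (t a • w).toList.head? = some ⟨true, (a : M true)⟩
    rw [hmul, h4]
    simp
  · -- (t a)⁻¹ • (X a)ᶜ ⊆ Y a
    intro a x hx
    rw [Pi.inv_apply, Set.mem_smul_set] at hx
    obtain ⟨w, hw, rfl⟩ := hx
    have hinv : (t a)⁻¹ = of b₀⁻¹ * of (a : M true) * of b₀⁻¹ * of ((a : M true))⁻¹ := by
      rw [ht]
      simp [mul_inv_rev, ← map_inv, mul_assoc]
    have hstep : (of ((a : M true))⁻¹ • w).fstIdx = some true := by
      rcases word_cases w with rfl | ⟨i, m, rest, h1, hm, rfl⟩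
      · exact fstIdx_eq_of_toList (smul_toList_of_fstIdx_ne ((a : M true))⁻¹
          (inv_ne_one.2 a.2) (empty : Word M) (by simp [fstIdx, empty]))
      · cases i with
        | false =>
          exact fstIdx_eq_of_toList (smul_toList_of_fstIdx_ne ((a : M true))⁻¹
            (inv_ne_one.2 a.2) _ (by simp))
        | true =>
          have hma : m ≠ (a : M true) := by
            intro hma
            exact hw (by simp [hma, hX])
          exact fstIdx_eq_of_toList (smul_cons_merge ((a : M true))⁻¹ m rest h1 hm
            (by
              intro hcon
              apply hma
              have h' := eq_inv_of_mul_eq_one_right hcon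
              rw [inv_inv] at h'
              exact h'))
    have hb₀' : b₀⁻¹ ≠ 1 := inv_ne_one.2 hb₀
    have h2 : (of b₀⁻¹ • of ((a : M true))⁻¹ • w).toList
        = ⟨false, b₀⁻¹⟩ :: (of ((a : M true))⁻¹ • w).toList :=
      smul_toList_of_fstIdx_ne b₀⁻¹ hb₀' _ (by rw [hstep]; simp)
    have h3 : (of (a : M true) • of b₀⁻¹ • of ((a : M true))⁻¹ • w).toList
        = ⟨true, (a : M true)⟩ :: (of b₀⁻¹ • of ((a : M true))⁻¹ • w).toList :=
      smul_toList_of_fstIdx_ne _ a.2 _ (by rw [fstIdx_eq_of_toList h2]; simp)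
    have h4 : (of b₀⁻¹ • of (a : M true) • of b₀⁻¹ • of ((a : M true))⁻¹ • w).toList
        = ⟨false, b₀⁻¹⟩ :: (of (a : M true) • of b₀⁻¹ • of ((a : M true))⁻¹ • w).toList :=
      smul_toList_of_fstIdx_ne b₀⁻¹ hb₀' _ (by rw [fstIdx_eq_of_toList h3]; simp)
    have hmul : (t a)⁻¹ • w
        = of b₀⁻¹ • of (a : M true) • of b₀⁻¹ • of ((a : M true))⁻¹ • w := by
      rw [hinv]
      simp only [mul_smul]
    constructor
    · show ((t a)⁻¹ • w).toList.head? = some ⟨false, b₀⁻¹⟩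
      rw [hmul, h4]
      simp
    · show ((t a)⁻¹ • w).toList.tail.head? = some ⟨true, (a : M true)⟩
      rw [hmul, h4, h3]
      simp

/-- An infinite-order element gives an injective map from `FreeGroup Unit`. -/
theorem exists_injective_unit [∀ b, Nontrivial (M b)] :
    ∃ ψ : FreeGroup Unit →* CoprodI M, Injective ψ := by
  classical
  obtain ⟨a₀, ha₀⟩ := exists_ne (1 : M true)
  obtain ⟨b₀, hb₀⟩ := exists_ne (1 : M false)
  set g : CoprodI M := of a₀ * of b₀ with hg
  have key : ∀ n : ℕ, ((g ^ (n + 1)) • (empty : Word M)).fstIdx = some true := by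
    intro n
    induction n with
    | zero =>
      have h1 : (of b₀ • (empty : Word M)).toList = [⟨false, b₀⟩] :=
        smul_toList_of_fstIdx_ne b₀ hb₀ _ (by simp [fstIdx, empty])
      have h2 := smul_toList_of_fstIdx_ne a₀ ha₀ (of b₀ • (empty : Word M))
        (by rw [fstIdx_eq_of_toList h1]; simp)
      rw [pow_one, hg, mul_smul]
      exact fstIdx_eq_of_toList h2
    | succ n ih =>
      have hp : g ^ (n + 2) = g * g ^ (n + 1) := by
        rw [← pow_succ']
      rw [hp, mul_smul, hg, mul_smul]
      have h1 : (of b₀ • ((g ^ (n + 1)) • (empty : Word M))).toList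
          = ⟨false, b₀⟩ :: ((g ^ (n + 1)) • (empty : Word M)).toList :=
        smul_toList_of_fstIdx_ne b₀ hb₀ _ (by rw [ih]; simp)
      have h2 := smul_toList_of_fstIdx_ne a₀ ha₀ _ (by rw [fstIdx_eq_of_toList h1]; simp)
      exact fstIdx_eq_of_toList h2
  have hpow : ∀ n : ℕ, g ^ (n + 1) ≠ 1 := by
    intro n hcon
    have := key n
    rw [hcon, one_smul] at this
    simp [fstIdx, empty] at this
  have hzpow : ∀ n : ℤ, g ^ n = 1 → n = 0 := by
    intro n hn
    rcases n with n | n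
    · cases n with
      | zero => rfl
      | succ k =>
        exfalso
        apply hpow k
        have h2 : g ^ ((k + 1 : ℕ) : ℤ) = 1 := hn
        rwa [zpow_natCast] at h2
    · exfalso
      apply hpow n
      rw [zpow_negSucc, inv_eq_one] at hn
      exact hn
  refine ⟨FreeGroup.lift fun _ => g, ?_⟩
  rw [injective_iff_map_eq_one]
  intro x hx
  have hxn : x = FreeGroup.of () ^ (FreeGroup.freeGroupUnitEquivInt x) :=
    (FreeGroup.freeGroupUnitEquivInt.symm_apply_apply x).symm
  rw [hxn, map_zpow, FreeGroup.lift_apply_of] at hx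
  rw [hxn, hzpow _ hx, zpow_zero]

/-- The core lemma, for `Bool`-indexed free products. -/
theorem core {M : Bool → Type u} [∀ b, Group (M b)] [∀ b, Nontrivial (M b)]
    (hle : Cardinal.mk (M false) ≤ Cardinal.mk (M true)) :
    ∃ F : Subgroup (CoprodI M), IsFreeGroup F ∧ Cardinal.mk F = Cardinal.mk (CoprodI M) := by
  classical
  -- upper bound on the cardinality of the free product
  haveI : Nonempty (Σ b, M b) := ⟨⟨true, 1⟩⟩
  have hupper : Cardinal.mk (CoprodI M) ≤ max (Cardinal.mk (M true)) Cardinal.aleph0 := by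
    have e1 : Cardinal.mk (CoprodI M) = Cardinal.mk (Word M) := Cardinal.mk_congr Word.equiv
    have e2 : Cardinal.mk (Word M) ≤ Cardinal.mk (List (Σ b, M b)) :=
      Cardinal.mk_le_of_injective (f := Word.toList) fun _ _ h => Word.ext h
    have e3 : Cardinal.mk (List (Σ b, M b))
        = max (Cardinal.mk (Σ b, M b)) Cardinal.aleph0 :=
      Cardinal.mk_list_eq_max_mk_aleph0 _
    have e4 : Cardinal.mk (Σ b, M b) ≤ Cardinal.mk (M true ⊕ M false) := by
      apply Cardinal.mk_le_of_injective (f := fun x : Σ b, M b =>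
        match x with
        | ⟨true, m⟩ => Sum.inl m
        | ⟨false, m⟩ => Sum.inr m)
      rintro ⟨(_ | _), m⟩ ⟨(_ | _), m'⟩ h <;> simp_all
    have e5 : Cardinal.mk (M true ⊕ M false)
        ≤ max (Cardinal.mk (M true)) Cardinal.aleph0 := by
      rw [Cardinal.mk_sum, Cardinal.lift_id, Cardinal.lift_id]
      refine (Cardinal.add_le_max _ _).trans ?_
      apply max_le _ (le_max_right _ _)
      apply max_le _ ?_
      · exact le_max_left _ _
      · exact hle.trans (le_max_left _ _)
    rw [e1]
    refine e2.trans ?_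
    rw [e3]
    exact max_le ((e4.trans e5)) (le_max_right _ _)
  -- obtain an injective map from a suitable free group
  by_cases hnt : Nontrivial {x : M true // x ≠ 1}
  · obtain ⟨ψ, hψ⟩ := exists_injective_pingpong (M := M)
    have hι'card : Cardinal.mk (M true) ≤ max (Cardinal.mk {x : M true // x ≠ 1}) Cardinal.aleph0 := by
      have : Cardinal.mk (M true) ≤ Cardinal.mk (Option {x : M true // x ≠ 1}) := by
        apply Cardinal.mk_le_of_injective (f := fun x : M true =>
          if h : x = 1 then (none : Option {x : M true // x ≠ 1}) else some ⟨x, h⟩)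
        intro x y h
        by_cases hx : x = 1 <;> by_cases hy : y = 1 <;> simp_all [Subtype.ext_iff]
      refine this.trans ?_
      rw [Cardinal.mk_option]
      refine (Cardinal.add_le_max _ _).trans ?_
      apply max_le _ (le_max_right _ _)
      exact max_le (le_max_left _ _) ((Cardinal.one_le_aleph0).trans (le_max_right _ _))
    refine ⟨ψ.range, IsFreeGroup.ofMulEquiv (MonoidHom.ofInjective hψ), le_antisymm ?_ ?_⟩
    · exact Cardinal.mk_le_of_injective Subtype.val_injective
    · have hF : Cardinal.mk ψ.range = max (Cardinal.mk {x : M true // x ≠ 1}) Cardinal.aleph0 := by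
        rw [← Cardinal.mk_congr (MonoidHom.ofInjective hψ).toEquiv]
        exact Cardinal.mk_freeGroup _
      rw [hF]
      exact hupper.trans (max_le (hι'card) (le_max_right _ _))
  · -- `M true` has exactly two elements
    obtain ⟨ψ₀, hψ₀⟩ := exists_injective_unit (M := M)
    set ψ : FreeGroup (ULift.{u} Unit) →* CoprodI M :=
      ψ₀.comp (FreeGroup.freeGroupCongr Equiv.ulift).toMonoidHom with hψdef
    have hψ : Function.Injective ψ := fun a b hab =>
      (FreeGroup.freeGroupCongr Equiv.ulift).injective (hψ₀ hab)
    obtain ⟨a₀, ha₀⟩ := exists_ne (1 : M true)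
    have hsmall : Cardinal.mk (M true) ≤ Cardinal.aleph0 := by
      have hsub : ∀ x : M true, x = 1 ∨ x = a₀ := by
        intro x
        by_cases hx : x = 1
        · exact Or.inl hx
        · right
          by_contra hxa
          exact hnt ⟨⟨x, hx⟩, ⟨a₀, ha₀⟩, fun hcon => hxa (congrArg Subtype.val hcon)⟩
      have : Finite (M true) := by
        have : (Set.univ : Set (M true)) ⊆ {1, a₀} := fun x _ => by
          rcases hsub x with h | h <;> simp [h]
        have hfin : (Set.univ : Set (M true)).Finite :=
          Set.Finite.subset (Set.toFinite _) this
        rw [Set.finite_univ_iff] at hfin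
        exact hfin
      exact (Cardinal.lt_aleph0_of_finite _).le
    refine ⟨ψ.range, IsFreeGroup.ofMulEquiv (MonoidHom.ofInjective hψ), le_antisymm ?_ ?_⟩
    · exact Cardinal.mk_le_of_injective Subtype.val_injective
    · have hF : Cardinal.mk ψ.range = Cardinal.aleph0 := by
        rw [← Cardinal.mk_congr (MonoidHom.ofInjective hψ).toEquiv]
        rw [Cardinal.mk_freeGroup]
        simp
      rw [hF]
      exact hupper.trans (max_le (hsmall.trans le_rfl) le_rfl)

end Bool

/-- Transporting the conclusion along a `MulEquiv`. -/
theorem transport {G H : Type w} [Group G] [Group H] (e : G ≃* H)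
    (h : ∃ F : Subgroup G, IsFreeGroup F ∧ Cardinal.mk F = Cardinal.mk G) :
    ∃ F : Subgroup H, IsFreeGroup F ∧ Cardinal.mk F = Cardinal.mk H := by
  obtain ⟨F, hF, hc⟩ := h
  haveI := hF
  refine ⟨F.map e.toMonoidHom, IsFreeGroup.ofMulEquiv
    (F.equivMapOfInjective e.toMonoidHom e.injective), ?_⟩
  rw [← Cardinal.mk_congr (F.equivMapOfInjective e.toMonoidHom e.injective).toEquiv, hc]
  exact Cardinal.mk_congr e.toEquiv

/-- The `Bool`-indexed family corresponding to a pair of groups. -/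
def fam (A : Type u) (B : Type v) : Bool → Type (max u v) :=
  fun b => cond b (ULift.{v} A) (ULift.{u} B)

instance famGroup (A : Type u) (B : Type v) [Group A] [Group B] :
    ∀ b, Group (fam A B b)
  | true => inferInstanceAs (Group (ULift A))
  | false => inferInstanceAs (Group (ULift B))

instance famNontrivial (A : Type u) (B : Type v) [Group A] [Group B]
    [Nontrivial A] [Nontrivial B] : ∀ b, Nontrivial (fam A B b)
  | true => inferInstanceAs (Nontrivial (ULift A))
  | false => inferInstanceAs (Nontrivial (ULift B))

open scoped Monoid.Coprod in
/-- The free product of `A` and `B` as a `Bool`-indexed `CoprodI`. -/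
noncomputable def famEquiv (A : Type u) (B : Type v) [Group A] [Group B] :
    CoprodI (fam A B) ≃* A ∗ B :=
  MonoidHom.toMulEquiv
    (CoprodI.lift fun b => Bool.rec
      (Coprod.inr.comp MulEquiv.ulift.toMonoidHom)
      (Coprod.inl.comp MulEquiv.ulift.toMonoidHom) b)
    (Coprod.lift
      ((CoprodI.of (i := true)).comp MulEquiv.ulift.symm.toMonoidHom)
      ((CoprodI.of (i := false)).comp MulEquiv.ulift.symm.toMonoidHom))
    (by
      ext1 b
      cases b <;> ext x <;> simp <;> rfl)
    (by
      apply Coprod.hom_ext <;> ext x <;> simp <;> rfl)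

end FreeProdBigAux

open scoped Monoid.Coprod in
/-- **Lemma 2.4.** If `G = A ∗ B` is the free product of two nontrivial groups, then `G`
has a free subgroup whose cardinality equals the cardinality of `G`. -/
theorem free_product_has_big_free_subgroup (A B : Type*) [Group A] [Group B]
    [Nontrivial A] [Nontrivial B] :
    ∃ F : Subgroup (A ∗ B), IsFreeGroup F ∧ Cardinal.mk F = Cardinal.mk (A ∗ B) := by
  rcases le_total (Cardinal.mk (FreeProdBigAux.fam A B false))
      (Cardinal.mk (FreeProdBigAux.fam A B true)) with h | h
  · exact FreeProdBigAux.transport (FreeProdBigAux.famEquiv A B) (FreeProdBigAux.core h)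
  · have h' : Cardinal.mk (FreeProdBigAux.fam B A false)
        ≤ Cardinal.mk (FreeProdBigAux.fam B A true) := h
    exact FreeProdBigAux.transport
      ((FreeProdBigAux.famEquiv B A).trans (MulEquiv.coprodComm B A))
      (FreeProdBigAux.core h')
end

section
/- Let G be a locally free group and D a finitely generated subgroup of G with μ_G(D) = m. If M_1 ⊆ M_2 ⊆ ⋯ is an ascending chain of subgroups of G such that for every i, D ⊆ M_i and r(M_i) = m, then the union M* = ⋃_{i=1}^∞ M_i satisfies D ⊆ M* and r(M*) = m. -/
/-- A group is locally free if every finitely generated subgroup is free. -/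
def IsLocallyFree (G : Type*) [Group G] : Prop :=
  ∀ H : Subgroup G, H.FG → IsFreeGroup H

/-- `IsFreeOfRank F n` means that the subgroup `F` is a free group of rank `n`. -/
def IsFreeOfRank {G : Type*} [Group G] (F : Subgroup G) (n : ℕ) : Prop :=
  Nonempty (F ≃* FreeGroup (Fin n))

/-- `Mu D m` says that `m = μ_G(D)`: `m` is the least positive integer such that `D` is
contained in a free subgroup of `G` of rank `m`. -/
def Mu {G : Type*} [Group G] (D : Subgroup G) (m : ℕ) : Prop :=
  IsLeast {n : ℕ | 0 < n ∧ ∃ F : Subgroup G, D ≤ F ∧ IsFreeOfRank F n} m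

/-- `HasRank M m` says that the rank `r(M)` of the locally free group `M` equals `m`,
i.e. `m` is the maximum of `μ_M(H)` over the finitely generated subgroups `H` of `M`,
where `μ_M` is computed inside `M`. -/
def HasRank (M : Type*) [Group M] (m : ℕ) : Prop :=
  IsGreatest {n : ℕ | ∃ D : Subgroup M, D.FG ∧ Mu D n} m

section Aux

private lemma fg_of_mulEquiv {A B : Type*} [Group A] [Group B] (e : A ≃* B) (h : Group.FG A) :
    Group.FG B :=
  @Group.fg_of_surjective A _ B _ h e.toMonoidHom e.surjective

private lemma finite_of_freeGroup_fg {ι : Type*} (h : Group.FG (FreeGroup ι)) : Finite ι := by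
  have h1 : Group.FG (Abelianization (FreeGroup ι)) :=
    @Group.fg_of_surjective _ _ _ _ h Abelianization.of
      (fun x => QuotientGroup.induction_on x fun g => ⟨g, rfl⟩)
  have h2 : AddGroup.FG (FreeAbelianGroup ι) := GroupFG.iff_add_fg.mp h1
  have h3 : Module.Finite ℤ (FreeAbelianGroup ι) := Module.Finite.iff_addGroup_fg.mpr h2
  have h4 : Module.Finite ℤ (ι →₀ ℤ) :=
    Module.Finite.equiv (FreeAbelianGroup.equivFinsupp ι).toIntLinearEquiv
  exact Module.Finite.finite_basis (Finsupp.basisSingleOne (R := ℤ) (ι := ι))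

private lemma exists_rank {H : Type*} [Group H] (hfg : Group.FG H) (hfree : IsFreeGroup H) :
    ∃ n : ℕ, Nonempty (H ≃* FreeGroup (Fin n)) := by
  obtain ⟨ι, ⟨b⟩⟩ := hfree.nonempty_basis
  have : Finite ι := finite_of_freeGroup_fg (fg_of_mulEquiv b.repr hfg)
  have : Fintype ι := Fintype.ofFinite ι
  exact ⟨Fintype.card ι, ⟨b.repr.trans (FreeGroup.freeGroupCongr (Fintype.equivFin ι))⟩⟩

private lemma isFreeOfRank_map {A B : Type*} [Group A] [Group B] {F : Subgroup A} {n : ℕ}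
    (f : A →* B) (hf : Function.Injective f) (h : IsFreeOfRank F n) :
    IsFreeOfRank (F.map f) n :=
  ⟨(F.equivMapOfInjective f hf).symm.trans h.some⟩

private lemma isFreeOfRank_subgroupOf {G : Type*} [Group G] {F L : Subgroup G} {n : ℕ}
    (hFL : F ≤ L) (h : IsFreeOfRank F n) : IsFreeOfRank (F.subgroupOf L) n :=
  ⟨(Subgroup.subgroupOfEquivOfLe hFL).trans h.some⟩

private lemma fg_subgroupOf {G : Type*} [Group G] {H L : Subgroup G} (hHL : H ≤ L) (h : H.FG) :
    (H.subgroupOf L).FG := by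
  rw [← Group.fg_iff_subgroup_fg]
  exact fg_of_mulEquiv (Subgroup.subgroupOfEquivOfLe hHL).symm ((Group.fg_iff_subgroup_fg H).mpr h)

/-- The key lemma: if `L` is a subgroup of the locally free group `G` with `r(L) = m` and `H`
is a finitely generated subgroup of `G` contained in `L`, then there is a free subgroup `F`
of `G` of some rank `k` with `0 < k ≤ m` and `H ≤ F ≤ L`. -/
private lemma key {G : Type*} [Group G] (hlf : IsLocallyFree G) {L : Subgroup G} {m : ℕ}
    (hL : HasRank L m) {H : Subgroup G} (hH : H.FG) (hHL : H ≤ L) :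
    ∃ (k : ℕ) (F : Subgroup G), 0 < k ∧ k ≤ m ∧ H ≤ F ∧ F ≤ L ∧ IsFreeOfRank F k := by
  set Hi := H.subgroupOf L with hHi
  have hHifg : Hi.FG := fg_subgroupOf hHL hH
  obtain ⟨r, ⟨e⟩⟩ := exists_rank ((Group.fg_iff_subgroup_fg H).mpr hH) (hlf H hH)
  set T : Set ℕ := {n | 0 < n ∧ ∃ F : Subgroup L, Hi ≤ F ∧ IsFreeOfRank F n} with hT
  have hne : T.Nonempty := by
    rcases Nat.eq_zero_or_pos r with hr | hr
    · subst hr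
      have hsub : Subsingleton H := e.toEquiv.subsingleton
      have hHbot : H = ⊥ := Subgroup.eq_bot_of_subsingleton H
      obtain ⟨Dm, _, hMuDm⟩ := hL.1
      obtain ⟨hm0, F, _, hFfree⟩ := hMuDm.1
      refine ⟨m, hm0, F, ?_, hFfree⟩
      intro x hx
      have hx1 : (x : G) ∈ (⊥ : Subgroup G) := hHbot ▸ hx
      have : x = 1 := Subtype.ext hx1
      exact this ▸ F.one_mem
    · exact ⟨r, hr, Hi, le_refl _, ⟨(Subgroup.subgroupOfEquivOfLe hHL).trans e⟩⟩
  have hkmem : sInf T ∈ T := Nat.sInf_mem hne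
  have hMuHi : Mu Hi (sInf T) := ⟨hkmem, fun n hn => Nat.sInf_le hn⟩
  have hkm : sInf T ≤ m := hL.2 ⟨Hi, hHifg, hMuHi⟩
  obtain ⟨hk0, F, hHiF, hFfree⟩ := hkmem
  refine ⟨sInf T, F.map L.subtype, hk0, hkm, ?_, Subgroup.map_subtype_le F,
    isFreeOfRank_map L.subtype L.subtype_injective hFfree⟩
  have hEq : Hi.map L.subtype = H := by
    rw [hHi, Subgroup.subgroupOf_map_subtype, inf_eq_left.mpr hHL]
  exact hEq ▸ Subgroup.map_mono hHiF

private lemma fg_map {G N : Type*} [Group G] [Group N] {H : Subgroup G} (f : G →* N)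
    (h : H.FG) : (H.map f).FG := by
  rw [Subgroup.fg_iff] at h ⊢
  obtain ⟨s, hs, hfin⟩ := h
  exact ⟨f '' s, by rw [← MonoidHom.map_closure, hs], hfin.image f⟩

end Aux

/-- Let `G` be locally free, `D` a finitely generated subgroup with `μ_G(D) = m`, and
`M₁ ⊆ M₂ ⊆ ⋯` an ascending chain of subgroups with `D ⊆ Mᵢ` and `r(Mᵢ) = m` for all
`i`.  Then the union `M* = ⋃ᵢ Mᵢ` satisfies `D ⊆ M*` and `r(M*) = m`. -/
theorem rank_of_union_of_chain {G : Type*} [Group G] (hlf : IsLocallyFree G)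
    (D : Subgroup G) (hD : D.FG) (m : ℕ) (hm : Mu D m)
    (M : ℕ → Subgroup G) (hchain : Monotone M)
    (hDM : ∀ i : ℕ, D ≤ M i) (hrk : ∀ i : ℕ, HasRank (M i) m) :
    D ≤ (⨆ i : ℕ, M i) ∧ HasRank (⨆ i : ℕ, M i : Subgroup G) m := by
  set S := ⨆ i : ℕ, M i with hS
  have hMS : ∀ i, M i ≤ S := fun i => le_iSup M i
  have hDS : D ≤ S := (hDM 0).trans (hMS 0)
  refine ⟨hDS, ?_, ?_⟩
  · -- membership: `m` is attained by `D` viewed as a subgroup of `S`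
    obtain ⟨k, F, hk0, hkm, hDF, hFM, hFfree⟩ := key hlf (hrk 0) hD (hDM 0)
    have hmk : m ≤ k := hm.2 ⟨hk0, F, hDF, hFfree⟩
    have hkeq : k = m := le_antisymm hkm hmk
    subst hkeq
    refine ⟨D.subgroupOf S, fg_subgroupOf hDS hD, ?_, ?_⟩
    · exact ⟨hk0, F.subgroupOf S, Subgroup.comap_mono hDF,
        isFreeOfRank_subgroupOf (hFM.trans (hMS 0)) hFfree⟩
    · rintro n ⟨hn0, F', hDF', hfree'⟩
      refine hm.2 ⟨hn0, F'.map S.subtype, ?_, isFreeOfRank_map S.subtype S.subtype_injective hfree'⟩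
      have hEq : (D.subgroupOf S).map S.subtype = D := by
        rw [Subgroup.subgroupOf_map_subtype, inf_eq_left.mpr hDS]
      exact hEq ▸ Subgroup.map_mono hDF'
  · -- upper bound
    rintro n ⟨H, hHfg, hMuH⟩
    set HG := H.map S.subtype with hHG
    have hHGfg : HG.FG := fg_map S.subtype hHfg
    have hHGS : HG ≤ S := Subgroup.map_subtype_le H
    -- find `i` with `HG ≤ M i`
    obtain ⟨i, hHGi⟩ : ∃ i, HG ≤ M i := by
      obtain ⟨s, hs⟩ := hHGfg
      have hx : ∀ x ∈ s, ∃ j, x ∈ M j := by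
        intro x hxs
        have : x ∈ S := hHGS (hs ▸ Subgroup.subset_closure hxs)
        exact (Subgroup.mem_iSup_of_directed hchain.directed_le).mp this
      choose f hf using hx
      refine ⟨s.attach.sup fun x => f x.1 x.2, ?_⟩
      rw [← hs, Subgroup.closure_le]
      intro x hxs
      exact hchain (Finset.le_sup (Finset.mem_attach s ⟨x, hxs⟩)) (hf x hxs)
    obtain ⟨k, F, hk0, hkm, hHGF, hFMi, hFfree⟩ := key hlf (hrk i) hHGfg hHGi
    have hHFS : H ≤ F.subgroupOf S := by
      have hEq : HG.subgroupOf S = H :=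
        Subgroup.comap_map_eq_self_of_injective S.subtype_injective H
      exact hEq ▸ Subgroup.comap_mono hHGF
    exact le_trans
      (hMuH.2 ⟨hk0, F.subgroupOf S, hHFS, isFreeOfRank_subgroupOf (hFMi.trans (hMS i)) hFfree⟩)
      hkm
end

section
/- Let G be a locally free group whose rank is not finite and let A be a finitely generated subgroup of G. Then there exists a free subgroup F of G of finite rank such that A ⊊ F and rank(F) > rank(A). -/
/-- The rank of `G` is not finite: for every positive integer `m` there is a finitely
generated subgroup `H` of `G` with `μ_G(H) > m`. -/
def RankNotFinite (G : Type*) [Group G] : Prop :=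
  ∀ m : ℕ, ∃ (H : Subgroup G) (k : ℕ), H.FG ∧ Mu H k ∧ m < k

lemma finite_of_fg_freeGroup (X : Type*) (h : Group.FG (FreeGroup X)) : Finite X := by
  have h1 : Group.FG (Abelianization (FreeGroup X)) :=
    @Group.fg_of_surjective _ _ _ _ h (Abelianization.of (G := FreeGroup X))
      Quotient.mk_surjective
  have h2 : AddGroup.FG (FreeAbelianGroup X) :=
    @GroupFG.iff_add_fg (Abelianization (FreeGroup X)) _ |>.mp h1
  have h3 : Module.Finite ℤ (FreeAbelianGroup X) :=
    Module.Finite.iff_addGroup_fg.mpr h2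
  exact Module.Finite.finite_basis (FreeAbelianGroup.basis X)

lemma freeGroup_rank_eq {m n : ℕ} (e : FreeGroup (Fin m) ≃* FreeGroup (Fin n)) : m = n := by
  simpa using Fintype.card_congr (Equiv.ofFreeGroupEquiv e)

lemma isFreeOfRank_unique {G : Type*} [Group G] {D : Subgroup G} {m n : ℕ}
    (h1 : IsFreeOfRank D m) (h2 : IsFreeOfRank D n) : m = n :=
  freeGroup_rank_eq (h1.some.symm.trans h2.some)

lemma exists_isFreeOfRank {G : Type*} [Group G] (hlf : IsLocallyFree G)
    (D : Subgroup G) (hD : D.FG) : ∃ n : ℕ, IsFreeOfRank D n := by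
  have hfree : IsFreeGroup D := hlf D hD
  have hfg : Group.FG D := (Group.fg_iff_subgroup_fg D).mpr hD
  have e : D ≃* FreeGroup (IsFreeGroup.Generators D) := IsFreeGroup.toFreeGroup D
  have hfg' : Group.FG (FreeGroup (IsFreeGroup.Generators D)) :=
    @Group.fg_of_surjective _ _ _ _ hfg e.toMonoidHom e.surjective
  have : Finite (IsFreeGroup.Generators D) := finite_of_fg_freeGroup _ hfg'
  cases nonempty_fintype (IsFreeGroup.Generators D)
  refine ⟨Fintype.card (IsFreeGroup.Generators D),
    ⟨e.trans (FreeGroup.freeGroupCongr (Fintype.equivFin _))⟩⟩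

lemma Subgroup.FG.sup' {G : Type*} [Group G] {A B : Subgroup G}
    (hA : A.FG) (hB : B.FG) : (A ⊔ B).FG := by
  classical
  obtain ⟨S, hS⟩ := hA
  obtain ⟨T, hT⟩ := hB
  exact ⟨S ∪ T, by rw [Finset.coe_union, Subgroup.closure_union, hS, hT]⟩

/-- If `G` is a locally free group whose rank is not finite and `A` is a finitely
generated subgroup of `G`, then there is a free subgroup `F` of `G` of finite rank `n`
such that `A ⊊ F` and `n > rank A`. -/
theorem exists_bigger_free_subgroup {G : Type*} [Group G]
    (hlf : IsLocallyFree G) (hnf : RankNotFinite G)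
    (A : Subgroup G) (hA : A.FG) :
    ∃ (F : Subgroup G) (n : ℕ), IsFreeOfRank F n ∧ A < F ∧
      ∀ k : ℕ, IsFreeOfRank A k → k < n := by
  obtain ⟨r, hAr⟩ := exists_isFreeOfRank hlf A hA
  obtain ⟨H, k, hHfg, hMu, hrk⟩ := hnf r
  have hJfg : (A ⊔ H).FG := Subgroup.FG.sup' hA hHfg
  obtain ⟨n, hJn⟩ := exists_isFreeOfRank hlf (A ⊔ H) hJfg
  rcases Nat.eq_zero_or_pos n with hn0 | hn
  · -- A ⊔ H is trivial; use the witness free subgroup of rank k containing H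
    subst hn0
    obtain ⟨hk0, F', hHF', hF'k⟩ := hMu.1
    have hJbot : (A ⊔ H : Subgroup G) = ⊥ := by
      have : Subsingleton (A ⊔ H : Subgroup G) := hJn.some.toEquiv.subsingleton
      exact Subgroup.eq_bot_of_subsingleton _
    have hAbot : A = ⊥ := le_bot_iff.mp (hJbot ▸ le_sup_left (b := H))
    have hr0 : r = 0 := by
      have : IsFreeOfRank A 0 := hAbot ▸ hJbot ▸ hJn
      exact isFreeOfRank_unique hAr this
    refine ⟨F', k, hF'k, ?_, ?_⟩
    · rw [hAbot, bot_lt_iff_ne_bot]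
      intro hbot
      haveI : Nonempty (Fin k) := ⟨⟨0, hk0⟩⟩
      obtain ⟨e⟩ := hF'k
      have : Infinite ↥F' := e.toEquiv.infinite_iff.mpr inferInstance
      rw [hbot] at this
      exact this.not_finite (by infer_instance)
    · intro j hj
      have : j = r := isFreeOfRank_unique hj hAr
      omega
  · -- A ⊔ H is a free subgroup of rank n ≥ k > r
    have hkn : k ≤ n := hMu.2 ⟨hn, A ⊔ H, le_sup_right, hJn⟩
    refine ⟨A ⊔ H, n, hJn, ?_, ?_⟩
    · refine lt_of_le_of_ne le_sup_left fun hEq => ?_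
      have : r = n := isFreeOfRank_unique hAr (hEq ▸ hJn)
      omega
    · intro j hj
      have : j = r := isFreeOfRank_unique hj hAr
      omega
end
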